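/- arXiv:2203.11142 — 3 statements merged into one kernel-verified Lean document; each statement's English description precedes it below -/
import Mathlib

section
/- Let g ∈ ℚ⟦t⟧ be the formal power series with coefficient 0 at t⁰, coefficient 1 at t¹, and coefficient (∏_{k=2}^{n}(3k−4))/n! at tⁿ for every n ≥ 2 (i.e. g = t + ∑_{n≥2} (2·5···(3n−4)/n!) tⁿ). Then g − g² + (1/3)·g³ = t, i.e. g is the compositional inverse of the polynomial power series t − t² + (1/3)t³. -/
/-!
Since `g - g² + g³/3 = (1 - (1 - g)³)/3`, it suffices to show `(1 - g)³ = 1 - 3t`. The coefficient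
formula is the recurrence `(n + 1) gₙ₊₁ = (3n - 1) gₙ`, which says that `u = 1 - g` solves the linear
ODE `(1 - 3t) u' = -u`. Then `u³` solves `(1 - 3t) v' = -3v`, as does `1 - 3t`; both have constant
term `1`, and a power series solution of such an ODE is determined by its constant term.
-/

open PowerSeries Nat

namespace PowerSeries

variable {R : Type*} [CommRing R]

theorem one_sub_C_mul_X_mul_derivative_eq_C_mul_iff {a b : R} {f : R⟦X⟧} :
    (1 - C a * X) * d⁄dX R f = C b * f ↔
      ∀ n : ℕ, coeff (n + 1) f * (n + 1) = (a * n + b) * coeff n f := by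
  rw [PowerSeries.ext_iff]
  refine forall_congr' fun n => ?_
  rcases n with _ | n
  · simp only [sub_mul, one_mul, mul_assoc, map_sub, coeff_C_mul, coeff_zero_X_mul,
      coeff_derivative]
    simp
  · simp only [sub_mul, one_mul, mul_assoc, map_sub, coeff_C_mul, coeff_succ_X_mul,
      coeff_derivative]
    push_cast
    constructor <;> intro h <;> linear_combination h

theorem eq_of_one_sub_C_mul_X_mul_derivative_eq [IsAddTorsionFree R] {a b : R} {f h : R⟦X⟧}
    (hf : (1 - C a * X) * d⁄dX R f = C b * f) (hh : (1 - C a * X) * d⁄dX R h = C b * h)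
    (h0 : constantCoeff f = constantCoeff h) : f = h := by
  rw [one_sub_C_mul_X_mul_derivative_eq_C_mul_iff] at hf hh
  ext n
  induction n with
  | zero => simpa using h0
  | succ n ih =>
    have : (n + 1) • coeff (n + 1) f = (n + 1) • coeff (n + 1) h := by
      simp only [nsmul_eq_mul, Nat.cast_add, Nat.cast_one, mul_comm _ (coeff _ _), hf, hh, ih]
    exact nsmul_right_injective n.succ_ne_zero this

theorem one_sub_C_mul_X_mul_derivative_pow {a b : R} {f : R⟦X⟧}
    (hf : (1 - C a * X) * d⁄dX R f = C b * f) (k : ℕ) :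
    (1 - C a * X) * d⁄dX R (f ^ k) = C (k * b) * f ^ k := by
  rcases k with _ | k
  · simp
  · rw [derivative_pow, Nat.add_sub_cancel, mul_left_comm, hf, map_mul, map_natCast]
    ring

end PowerSeries

theorem prod_div_factorial_succ_mul {n : ℕ} (hn : 1 ≤ n) :
    (∏ k ∈ Finset.Icc 2 (n + 1), (3 * (k : ℚ) - 4)) / (n + 1)! * (n + 1) =
      (3 * n - 1) * ((∏ k ∈ Finset.Icc 2 n, (3 * (k : ℚ) - 4)) / n !) := by
  rw [Finset.prod_Icc_succ_top (by omega), Nat.factorial_succ]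
  push_cast
  field_simp
  ring

/-- Let `g ∈ ℚ⟦t⟧` have coefficient `0` at `t⁰`, `1` at `t¹`, and
`(∏_{k=2}^{n} (3k-4))/n!` at `tⁿ` for `n ≥ 2`.  Then `g - g² + (1/3)·g³ = t`. -/
theorem stmt_0 (g : PowerSeries ℚ)
    (hg0 : PowerSeries.coeff (R := ℚ) 0 g = 0)
    (hg1 : PowerSeries.coeff (R := ℚ) 1 g = 1)
    (hg : ∀ n : ℕ, 2 ≤ n →
      PowerSeries.coeff (R := ℚ) n g =
        (∏ k ∈ Finset.Icc 2 n, (3 * (k : ℚ) - 4)) / (Nat.factorial n : ℚ)) :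
    g - g ^ 2 + PowerSeries.C (R := ℚ) (1 / 3) * g ^ 3 = PowerSeries.X := by
  have hg0' : constantCoeff g = 0 := by rwa [← coeff_zero_eq_constantCoeff_apply]
  have hg' : ∀ n : ℕ, 1 ≤ n →
      coeff n g = (∏ k ∈ Finset.Icc 2 n, (3 * (k : ℚ) - 4)) / n ! := by
    intro n hn
    rcases hn.eq_or_lt with rfl | hn
    · simp [hg1]
    · exact hg n hn
  have hode : (1 - C 3 * X) * d⁄dX ℚ (1 - g) = C (-1) * (1 - g) := by
    rw [one_sub_C_mul_X_mul_derivative_eq_C_mul_iff]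
    intro n
    rcases n.eq_zero_or_pos with rfl | hn
    · simp [hg0', hg1]
    · simp only [map_sub, coeff_one, if_neg (Nat.succ_ne_zero n), if_neg hn.ne', hg' n hn,
        hg' (n + 1) (by omega)]
      linear_combination -prod_div_factorial_succ_mul hn
  have hcube : (1 - g) ^ 3 = 1 - C 3 * X := by
    refine eq_of_one_sub_C_mul_X_mul_derivative_eq (one_sub_C_mul_X_mul_derivative_pow hode 3)
      ?_ (by simp [hg0'])
    simp only [map_sub, Derivation.map_one_eq_zero, Derivation.leibniz, derivative_X,
      smul_eq_mul, mul_one, derivative_C, mul_zero, add_zero, zero_sub, mul_neg, cast_ofNat,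
      map_neg, neg_mul, neg_inj]
    ring
  have hC : C (1 / 3 : ℚ) * 3 = 1 := by
    rw [← map_ofNat C 3, ← map_mul]
    norm_num
  rw [map_ofNat] at hcube
  linear_combination (-C (1 / 3 : ℚ)) * hcube - (g - g ^ 2 - X) * hC
end

section
/- Let A be a nonunital associative ring equipped with a compatible ℚ-module structure (so multiplication is ℚ-bilinear), and write [a,b] = ab − ba. Suppose that for all a, b, c ∈ A: (i) [a,b]c + [c,b]a = 0, (ii) a[c,b] + c[a,b] = 0, and (iii) abc − acb + bca − bac + cab − cba = 0. Then for all a, b, c ∈ A all six permuted products coincide: abc = acb = bac = bca = cab = cba. -/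
/-!
All three identities are linear combinations of triple products, and expanding gives
`3 (abc - acb) = (iii)(a,b,c) - 2 (ii)(a,b,c) - (ii)(c,a,b)` and
`3 (abc - bac) = (iii)(a,b,c) + 2 (i)(a,b,c) + (i)(b,c,a)`. As a `ℚ`-module has no
`3`-torsion, triple products are invariant under swapping the last two and the first two
factors, and these transpositions generate all permutations.
-/

section

variable {A : Type*} [NonUnitalRing A] [IsAddTorsionFree A]

theorem mul_right_comm_of_commutator_identities
    (h2 : ∀ a b c : A, a * (c * b - b * c) + c * (a * b - b * a) = 0)
    (h3 : ∀ a b c : A,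
      a * b * c - a * c * b + b * c * a - b * a * c + c * a * b - c * b * a = 0)
    (a b c : A) : a * b * c = a * c * b := by
  refine sub_eq_zero.mp ((nsmul_eq_zero_iff_right three_ne_zero).mp ?_)
  calc 3 • (a * b * c - a * c * b)
      = (a * b * c - a * c * b + b * c * a - b * a * c + c * a * b - c * b * a)
        - 2 • (a * (c * b - b * c) + c * (a * b - b * a))
        - (c * (b * a - a * b) + b * (c * a - a * c)) := by noncomm_ring
    _ = 0 := by rw [h3, h2, h2, smul_zero, sub_zero, sub_zero]

theorem mul_left_comm_of_commutator_identities
    (h1 : ∀ a b c : A, (a * b - b * a) * c + (c * b - b * c) * a = 0)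
    (h3 : ∀ a b c : A,
      a * b * c - a * c * b + b * c * a - b * a * c + c * a * b - c * b * a = 0)
    (a b c : A) : a * b * c = b * a * c := by
  refine sub_eq_zero.mp ((nsmul_eq_zero_iff_right three_ne_zero).mp ?_)
  calc 3 • (a * b * c - b * a * c)
      = (a * b * c - a * c * b + b * c * a - b * a * c + c * a * b - c * b * a)
        + 2 • ((a * b - b * a) * c + (c * b - b * c) * a)
        + ((b * c - c * b) * a + (a * c - c * a) * b) := by noncomm_ring
    _ = 0 := by rw [h3, h1, h1, smul_zero, add_zero, add_zero]

end

theorem stmt_18_general (A : Type*) [NonUnitalRing A] [Module ℚ A]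
    (h1 : ∀ a b c : A, (a * b - b * a) * c + (c * b - b * c) * a = 0)
    (h2 : ∀ a b c : A, a * (c * b - b * c) + c * (a * b - b * a) = 0)
    (h3 : ∀ a b c : A,
      a * b * c - a * c * b + b * c * a - b * a * c + c * a * b - c * b * a = 0) :
    ∀ a b c : A,
      a * b * c = a * c * b ∧ a * b * c = b * a * c ∧ a * b * c = b * c * a ∧
      a * b * c = c * a * b ∧ a * b * c = c * b * a := by
  have := IsAddTorsionFree.of_module_rat (M := A)
  have swap23 := mul_right_comm_of_commutator_identities h2 h3
  have swap12 := mul_left_comm_of_commutator_identities h1 h3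
  intro a b c
  refine ⟨swap23 a b c, swap12 a b c, ?_, ?_, ?_⟩
  · rw [swap12 a b c, swap23 b a c]
  · rw [swap23 a b c, swap12 a c b]
  · rw [swap23 a b c, swap12 a c b, swap23 c a b]

/-- in a nonunital associative ring with a compatible `ℚ`-module
structure, if `[a,b]c + [c,b]a = 0`, `a[c,b] + c[a,b] = 0` and
`abc - acb + bca - bac + cab - cba = 0` for all `a, b, c`, then all six permuted
triple products coincide. -/
theorem stmt_18 (A : Type*) [NonUnitalRing A] [Module ℚ A]
    [IsScalarTower ℚ A A] [SMulCommClass ℚ A A]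
    (h1 : ∀ a b c : A, (a * b - b * a) * c + (c * b - b * c) * a = 0)
    (h2 : ∀ a b c : A, a * (c * b - b * c) + c * (a * b - b * a) = 0)
    (h3 : ∀ a b c : A,
      a * b * c - a * c * b + b * c * a - b * a * c + c * a * b - c * b * a = 0) :
    ∀ a b c : A,
      a * b * c = a * c * b ∧ a * b * c = b * a * c ∧ a * b * c = b * c * a ∧
      a * b * c = c * a * b ∧ a * b * c = c * b * a :=
  stmt_18_general A h1 h2 h3
end

section
/- Let A be a nonunital associative ring equipped with a compatible ℚ-module structure (so multiplication is ℚ-bilinear), and write [a,b] = ab − ba. Suppose that for all a, b, c ∈ A: (i) [a,b]c + [c,b]a = 0, (ii) a[c,b] + c[a,b] = 0, and (iii) abc + acb + bca + bac + cab + cba = 0. Then for all a, b, c ∈ A the permuted products satisfy the sign rule: acb = −abc, bac = −abc, bca = abc, cab = abc, and cba = −abc. -/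
/-! Write `E₁(a,b,c)`, `E₂(a,b,c)`, `E₃(a,b,c)` for the left-hand sides of the three identities.
Expanding, `3(acb + abc) = 2E₁(a,b,c) + E₂(a,b,c) + 2E₁(a,c,b) + E₂(a,c,b) + E₃(a,b,c)` and
`3(bac + abc) = E₁(a,c,b) + 2E₂(a,c,b) + E₃(a,b,c)`, so dividing by `3` both transpositions
`acb = -abc` and `bac = -abc` hold. They generate all permutations of the three factors, and each
permuted product is `abc` times the sign of the permutation. -/

lemma eq_zero_of_three_nsmul_eq_zero {M : Type*} [AddCommGroup M] [Module ℚ M] {x : M}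
    (h : 3 • x = 0) : x = 0 := by
  rw [← Nat.cast_smul_eq_nsmul ℚ] at h
  exact (smul_eq_zero_iff_right (by norm_num)).mp h

section SignRule

variable {A : Type*} [NonUnitalRing A] [Module ℚ A]
  (h1 : ∀ a b c : A, (a * b - b * a) * c + (c * b - b * c) * a = 0)
  (h2 : ∀ a b c : A, a * (c * b - b * c) + c * (a * b - b * a) = 0)
  (h3 : ∀ a b c : A,
    a * b * c + a * c * b + b * c * a + b * a * c + c * a * b + c * b * a = 0)
include h1 h2 h3

theorem mul_mul_swap_right_eq_neg (a b c : A) : a * c * b = -(a * b * c) := by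
  have key : 3 • (a * c * b + a * b * c) =
      2 • ((a * b - b * a) * c + (c * b - b * c) * a) + (a * (c * b - b * c) + c * (a * b - b * a))
        + 2 • ((a * c - c * a) * b + (b * c - c * b) * a)
        + (a * (b * c - c * b) + b * (a * c - c * a))
        + (a * b * c + a * c * b + b * c * a + b * a * c + c * a * b + c * b * a) := by
    noncomm_ring
  simp only [h1, h2, h3, smul_zero, add_zero] at key
  exact eq_neg_of_add_eq_zero_left (eq_zero_of_three_nsmul_eq_zero key)

theorem mul_mul_swap_left_eq_neg (a b c : A) : b * a * c = -(a * b * c) := by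
  have key : 3 • (b * a * c + a * b * c) =
      ((a * c - c * a) * b + (b * c - c * b) * a) + 2 • (a * (b * c - c * b) + b * (a * c - c * a))
        + (a * b * c + a * c * b + b * c * a + b * a * c + c * a * b + c * b * a) := by
    noncomm_ring
  simp only [h1, h2, h3, smul_zero, add_zero] at key
  exact eq_neg_of_add_eq_zero_left (eq_zero_of_three_nsmul_eq_zero key)

end SignRule

theorem stmt_19_general (A : Type*) [NonUnitalRing A] [Module ℚ A]
    (h1 : ∀ a b c : A, (a * b - b * a) * c + (c * b - b * c) * a = 0)
    (h2 : ∀ a b c : A, a * (c * b - b * c) + c * (a * b - b * a) = 0)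
    (h3 : ∀ a b c : A,
      a * b * c + a * c * b + b * c * a + b * a * c + c * a * b + c * b * a = 0) :
    ∀ a b c : A,
      a * c * b = -(a * b * c) ∧ b * a * c = -(a * b * c) ∧ b * c * a = a * b * c ∧
      c * a * b = a * b * c ∧ c * b * a = -(a * b * c) := by
  have swap_right := mul_mul_swap_right_eq_neg h1 h2 h3
  have swap_left := mul_mul_swap_left_eq_neg h1 h2 h3
  intro a b c
  refine ⟨swap_right a b c, swap_left a b c, ?_, ?_, ?_⟩
  · rw [swap_right b a c, swap_left a b c, neg_neg]
  · rw [swap_left a c b, swap_right a b c, neg_neg]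
  · rw [swap_right c a b, swap_left a c b, swap_right a b c, neg_neg]

/-- in a nonunital associative ring with a compatible `ℚ`-module
structure, if `[a,b]c + [c,b]a = 0`, `a[c,b] + c[a,b] = 0` and
`abc + acb + bca + bac + cab + cba = 0` for all `a, b, c`, then the permuted triple
products satisfy the sign rule `acb = -abc`, `bac = -abc`, `bca = abc`, `cab = abc`,
`cba = -abc`. -/
theorem stmt_19 (A : Type*) [NonUnitalRing A] [Module ℚ A]
    [IsScalarTower ℚ A A] [SMulCommClass ℚ A A]
    (h1 : ∀ a b c : A, (a * b - b * a) * c + (c * b - b * c) * a = 0)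
    (h2 : ∀ a b c : A, a * (c * b - b * c) + c * (a * b - b * a) = 0)
    (h3 : ∀ a b c : A,
      a * b * c + a * c * b + b * c * a + b * a * c + c * a * b + c * b * a = 0) :
    ∀ a b c : A,
      a * c * b = -(a * b * c) ∧ b * a * c = -(a * b * c) ∧ b * c * a = a * b * c ∧
      c * a * b = a * b * c ∧ c * b * a = -(a * b * c) :=
  stmt_19_general A h1 h2 h3
end
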